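/- arXiv:2603.02280 — 2 statements merged into one kernel-verified Lean document; each statement's English description precedes it below -/
import Mathlib

section
/- Let N ≥ 1, let f : ℕ → ℝ satisfy f[n] ≥ 0 and f[n+1] ≤ f[n] for all n, and let a_A, a_B : ℕ → {−1, +1} be two supervision-polarity sequences. Define cumulative positive counts S_k[n] = Σ_{j=0}^{n} (a_k[j]+1)/2 and temporal positive supervision strengths Q_k[N] = Σ_{n=0}^{N−1} f[N−1−n]·a_k[n] for k ∈ {A, B}. If the two sequences have the same total number of positives, i.e. S_A[N−1] = S_B[N−1], and S_A[n] ≥ S_B[n] for all n = 0, 1, …, N−1, then Q_A[N] ≤ Q_B[N]. -/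
/-! By Abel summation, `Q_A[N] - Q_B[N]` is minus a sum of products of the increments of the
reversed kernel `n ↦ f (N - 1 - n)`, which are nonnegative because `f` decreases, with the
partial sums of `a_A - a_B`, which equal `2 (S_A - S_B) ≥ 0`; the boundary term vanishes
because the totals agree. -/

open Finset

theorem sum_range_mul_nonpos_of_monotone {R : Type*} [CommRing R] [PartialOrder R]
    [IsOrderedRing R] {g d : ℕ → R} {n : ℕ} (hg : Monotone g)
    (hpartial : ∀ k < n, 0 ≤ ∑ j ∈ range k, d j) (htotal : ∑ j ∈ range n, d j = 0) :
    ∑ i ∈ range n, g i * d i ≤ 0 := by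
  have hterms : 0 ≤ ∑ i ∈ range (n - 1), (g (i + 1) - g i) * ∑ j ∈ range (i + 1), d j := by
    refine sum_nonneg fun i hi => mul_nonneg ?_ (hpartial _ ?_)
    · exact sub_nonneg.mpr (hg i.le_succ)
    · have := mem_range.mp hi
      omega
  have hparts := sum_range_by_parts g d n
  simp only [smul_eq_mul] at hparts
  rw [hparts, htotal, mul_zero, zero_sub, neg_nonpos]
  exact hterms

theorem sum_range_mul_le_of_partialSums_le {R : Type*} [CommRing R] [PartialOrder R]
    [IsOrderedRing R] {g x y : ℕ → R} {n : ℕ} (hg : Monotone g)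
    (hdom : ∀ k < n, ∑ j ∈ range k, y j ≤ ∑ j ∈ range k, x j)
    (htotal : ∑ j ∈ range n, x j = ∑ j ∈ range n, y j) :
    ∑ i ∈ range n, g i * x i ≤ ∑ i ∈ range n, g i * y i := by
  have key := sum_range_mul_nonpos_of_monotone (d := fun j => x j - y j) hg
    (fun k hk => by simpa only [sum_sub_distrib, sub_nonneg] using hdom k hk)
    (by simpa only [sum_sub_distrib, sub_eq_zero] using htotal)
  simp only [mul_sub, sum_sub_distrib, sub_nonpos] at key
  exact key

theorem sum_range_succ_eq_two_mul_sub {a S : ℕ → ℝ}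
    (hS : ∀ n, S n = ∑ j ∈ range (n + 1), (a j + 1) / 2) (n : ℕ) :
    ∑ j ∈ range (n + 1), a j = 2 * S n - (n + 1) := by
  rw [hS, ← sum_div, sum_add_distrib]
  simp only [sum_const, card_range, nsmul_eq_mul, mul_one]
  push_cast
  ring

theorem temporal_imbalance_le_general
    (N : ℕ) (f : ℕ → ℝ)
    (hf_mono : ∀ n, f (n + 1) ≤ f n)
    (aA aB : ℕ → ℝ)
    (SA SB : ℕ → ℝ)
    (hSA : ∀ n, SA n = ∑ j ∈ Finset.range (n + 1), (aA j + 1) / 2)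
    (hSB : ∀ n, SB n = ∑ j ∈ Finset.range (n + 1), (aB j + 1) / 2)
    (htotal : SA (N - 1) = SB (N - 1))
    (hdom : ∀ n, n ≤ N - 1 → SB n ≤ SA n) :
    ∑ n ∈ Finset.range N, f (N - 1 - n) * aA n
      ≤ ∑ n ∈ Finset.range N, f (N - 1 - n) * aB n := by
  have hf : Antitone f := antitone_nat_of_succ_le hf_mono
  have hA := sum_range_succ_eq_two_mul_sub hSA
  have hB := sum_range_succ_eq_two_mul_sub hSB
  refine sum_range_mul_le_of_partialSums_le (fun i j hij => hf (by omega)) ?_ ?_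
  · rintro (_ | k) hk
    · simp
    · rw [hA, hB]
      linarith [hdom k (by omega)]
  · cases N with
    | zero => simp
    | succ M => rw [hA, hB, show M = M + 1 - 1 from rfl, htotal]

/-- **Temporal imbalance under equal sample counts.**
If two supervision-polarity sequences `aA`, `aB` (values in {−1,+1}) have the same total
number of positives up to step `N−1` and the cumulative positive counts of `A` dominate
those of `B` at every step, then for any nonnegative, monotonically decreasing memory
kernel `f`, the temporal positive supervision strength of `A` at step `N` is at most
that of `B`. -/
theorem temporal_imbalance_le
    (N : ℕ) (hN : 1 ≤ N) (f : ℕ → ℝ)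
    (hf_nonneg : ∀ n, 0 ≤ f n) (hf_mono : ∀ n, f (n + 1) ≤ f n)
    (aA aB : ℕ → ℝ)
    (haA : ∀ n, aA n = 1 ∨ aA n = -1) (haB : ∀ n, aB n = 1 ∨ aB n = -1)
    (SA SB : ℕ → ℝ)
    (hSA : ∀ n, SA n = ∑ j ∈ Finset.range (n + 1), (aA j + 1) / 2)
    (hSB : ∀ n, SB n = ∑ j ∈ Finset.range (n + 1), (aB j + 1) / 2)
    (htotal : SA (N - 1) = SB (N - 1))
    (hdom : ∀ n, n ≤ N - 1 → SB n ≤ SA n) :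
    ∑ n ∈ Finset.range N, f (N - 1 - n) * aA n
      ≤ ∑ n ∈ Finset.range N, f (N - 1 - n) * aB n :=
  temporal_imbalance_le_general N f hf_mono aA aB SA SB hSA hSB htotal hdom
end

section
/- Let N ≥ 1, let f : ℕ → ℝ satisfy f[n] ≥ 0 and f[n+1] < f[n] for all n (strictly decreasing), and let a_A, a_B : ℕ → {−1, +1} with cumulative positive counts S_k[n] = Σ_{j=0}^{n} (a_k[j]+1)/2 and Q_k[N] = Σ_{n=0}^{N−1} f[N−1−n]·a_k[n]. If S_A[N−1] = S_B[N−1], S_A[n] ≥ S_B[n] for all n ≤ N−1, and there exists some n ≤ N−2 with S_A[n] > S_B[n], then Q_A[N] < Q_B[N] strictly. -/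
/-! Summation by parts rewrites `∑ f[N-1-n] (a_A[n] - a_B[n])` as a sum of kernel increments
`f[N-1-n] - f[N-2-n] < 0` weighted by the cumulative differences `S_A[n] - S_B[n] ≥ 0`, the boundary
term vanishing because the totals agree; the step where `S_A > S_B` makes the sum strictly negative. -/

open Finset

theorem sum_range_mul_neg_of_partial_sums {R : Type*} [Ring R] [LinearOrder R]
    [IsStrictOrderedRing R] {g d : ℕ → R} {N : ℕ} (hg : StrictMonoOn g (Set.Iio N))
    (hD : ∀ n, n + 1 < N → 0 ≤ ∑ j ∈ range (n + 1), d j)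
    (hpos : ∃ m, m + 1 < N ∧ 0 < ∑ j ∈ range (m + 1), d j)
    (htot : ∑ j ∈ range N, d j = 0) :
    ∑ n ∈ range N, g n * d n < 0 := by
  simp only [← smul_eq_mul (a := g _)]
  rw [sum_range_by_parts, htot, smul_zero, zero_sub, neg_neg_iff_pos]
  have hinc : ∀ i ∈ range (N - 1), 0 < g (i + 1) - g i := fun i hi ↦ by
    rw [mem_range] at hi
    exact sub_pos.mpr (hg (by simp; omega) (by simp; omega) (Nat.lt_succ_self i))
  obtain ⟨m, hmN, hm⟩ := hpos
  refine sum_pos' (fun i hi ↦ ?_) ⟨m, mem_range.mpr (by omega), ?_⟩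
  · exact smul_nonneg (hinc i hi).le (hD i (by rw [mem_range] at hi; omega))
  · exact smul_pos (hinc m (mem_range.mpr (by omega))) hm

theorem temporal_imbalance_lt_general
    (N : ℕ) (f : ℕ → ℝ)
    (hf_strict : ∀ n, f (n + 1) < f n)
    (aA aB : ℕ → ℝ)
    (SA SB : ℕ → ℝ)
    (hSA : ∀ n, SA n = ∑ j ∈ Finset.range (n + 1), (aA j + 1) / 2)
    (hSB : ∀ n, SB n = ∑ j ∈ Finset.range (n + 1), (aB j + 1) / 2)
    (htotal : SA (N - 1) = SB (N - 1))
    (hdom : ∀ n, n ≤ N - 1 → SB n ≤ SA n)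
    (hstrict : ∃ n, n ≤ N - 2 ∧ SB n < SA n) :
    ∑ n ∈ Finset.range N, f (N - 1 - n) * aA n
      < ∑ n ∈ Finset.range N, f (N - 1 - n) * aB n := by
  obtain ⟨m, hm, hmlt⟩ := hstrict
  have hmN : m + 1 < N := by
    by_contra
    obtain rfl : m = N - 1 := by omega
    exact hmlt.ne htotal.symm
  let d n := (aA n + 1) / 2 - (aB n + 1) / 2
  have hD n : ∑ j ∈ range (n + 1), d j = SA n - SB n := by rw [hSA, hSB, sum_sub_distrib]
  have hg : StrictMonoOn (fun n ↦ f (N - 1 - n)) (Set.Iio N) := fun i hi j hj hij ↦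
    strictAnti_nat_of_succ_lt hf_strict (show N - 1 - j < N - 1 - i by simp at hi hj; omega)
  have hneg := sum_range_mul_neg_of_partial_sums hg
    (fun n hn ↦ by rw [hD]; linarith [hdom n (by omega)]) ⟨m, hmN, by rw [hD]; linarith⟩
    (by rw [← Nat.sub_add_cancel (by omega : 1 ≤ N), hD, htotal, sub_self])
  have hdiff : ∑ n ∈ range N, f (N - 1 - n) * aA n - ∑ n ∈ range N, f (N - 1 - n) * aB n
      = 2 * ∑ n ∈ range N, f (N - 1 - n) * d n := by
    rw [mul_sum, ← sum_sub_distrib]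
    exact sum_congr rfl fun n _ ↦ by ring
  linarith

/-- **Strict temporal imbalance.** With a strictly decreasing nonnegative memory kernel,
equal totals, cumulative dominance, and strict dominance at some step `n ≤ N−2`,
the strength inequality is strict. -/
theorem temporal_imbalance_lt
    (N : ℕ) (hN : 1 ≤ N) (f : ℕ → ℝ)
    (hf_nonneg : ∀ n, 0 ≤ f n) (hf_strict : ∀ n, f (n + 1) < f n)
    (aA aB : ℕ → ℝ)
    (haA : ∀ n, aA n = 1 ∨ aA n = -1) (haB : ∀ n, aB n = 1 ∨ aB n = -1)
    (SA SB : ℕ → ℝ)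
    (hSA : ∀ n, SA n = ∑ j ∈ Finset.range (n + 1), (aA j + 1) / 2)
    (hSB : ∀ n, SB n = ∑ j ∈ Finset.range (n + 1), (aB j + 1) / 2)
    (htotal : SA (N - 1) = SB (N - 1))
    (hdom : ∀ n, n ≤ N - 1 → SB n ≤ SA n)
    (hstrict : ∃ n, n ≤ N - 2 ∧ SB n < SA n) :
    ∑ n ∈ Finset.range N, f (N - 1 - n) * aA n
      < ∑ n ∈ Finset.range N, f (N - 1 - n) * aB n :=
  temporal_imbalance_lt_general N f hf_strict aA aB SA SB hSA hSB htotal hdom hstrict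
end
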